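/- arXiv:1410.0499 — 5 statements merged into one kernel-verified Lean document; each statement's English description precedes it below -/
import Mathlib

section
/- For every β ∈ ℝ, the function f̂_β(x,t) = (c²t² − ‖ν(x)‖²)^β, where ν is the reflection in the hyperplane H(a,b), satisfies the Euler–Poisson–Darboux equation ∂²u/∂t² − ((2β − 1 + d)/t)·∂u/∂t = c²·Δu on the region {(x,t) : t > 0, ‖ν(x)‖ < ct}. -/
/-!
The reflection `ν` is an involutive isometry, so `‖ν x‖ = ‖x - p‖` where `p = ν 0` is the mirror
image of the origin, and `f̂_β (x, t) = φ (c²t² - ‖x - p‖²)` with `φ s = s ^ β`. By the chain rule,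
with `k = 2β - 1 + d` and `s = c²t² - ‖x - p‖²`,
`∂²ₜu - (k / t) ∂ₜu = 2c²(1 - k) φ' s + 4c⁴t² φ'' s` and `c² Δu = c² (4‖x - p‖² φ'' s - 2d φ' s)`,
whose difference is `4c² (s φ'' s - (β - 1) φ' s) = 0` for the power `φ`.
-/

open Filter Topology Laplacian InnerProductSpace

section ChainRule

variable {E : Type*} [NormedAddCommGroup E] [NormedSpace ℝ E]
  {φ φ' : ℝ → ℝ} {φ'' : ℝ}

theorem deriv_deriv_comp {q q' : ℝ → ℝ} {q'' t : ℝ}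
    (hφ : ∀ᶠ s in 𝓝 (q t), HasDerivAt φ (φ' s) s) (hφ' : HasDerivAt φ' φ'' (q t))
    (hq : ∀ᶠ u in 𝓝 t, HasDerivAt q (q' u) u) (hq' : HasDerivAt q' q'' t) :
    deriv (deriv fun u => φ (q u)) t = φ'' * q' t ^ 2 + φ' (q t) * q'' := by
  have hderiv : deriv (fun u => φ (q u)) =ᶠ[𝓝 t] fun u => φ' (q u) * q' u := by
    filter_upwards [hq, hq.self_of_nhds.continuousAt.tendsto.eventually hφ] with u hqu hφu
    exact (hφu.comp u hqu).deriv
  have h : HasDerivAt (fun u => φ' (q u) * q' u) (φ'' * q' t * q' t + φ' (q t) * q'') t :=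
    (hφ'.comp t hq.self_of_nhds).mul hq'
  rw [hderiv.deriv_eq, h.deriv]
  ring

theorem iteratedFDeriv_two_comp_apply {Q : E → ℝ} {Q' : E → E →L[ℝ] ℝ}
    {Q'' : E →L[ℝ] E →L[ℝ] ℝ} {x : E}
    (hφ : ∀ᶠ s in 𝓝 (Q x), HasDerivAt φ (φ' s) s) (hφ' : HasDerivAt φ' φ'' (Q x))
    (hQ : ∀ᶠ y in 𝓝 x, HasFDerivAt Q (Q' y) y) (hQ' : HasFDerivAt Q' Q'' x) (m : Fin 2 → E) :
    iteratedFDeriv ℝ 2 (fun y => φ (Q y)) x m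
      = φ'' * Q' x (m 0) * Q' x (m 1) + φ' (Q x) * Q'' (m 0) (m 1) := by
  have hderiv : fderiv ℝ (fun y => φ (Q y)) =ᶠ[𝓝 x] fun y => φ' (Q y) • Q' y := by
    filter_upwards [hQ, hQ.self_of_nhds.continuousAt.tendsto.eventually hφ] with y hQy hφy
    exact (hφy.comp_hasFDerivAt y hQy).fderiv
  have h : HasFDerivAt (fun y => φ' (Q y) • Q' y)
      (φ' (Q x) • Q'' + (φ'' • Q' x).smulRight (Q' x)) x :=
    (hφ'.comp_hasFDerivAt x hQ.self_of_nhds).smul hQ'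
  rw [iteratedFDeriv_two_apply, hderiv.fderiv_eq, h.fderiv]
  simp only [add_apply, smul_apply, ContinuousLinearMap.smulRight_apply, smul_eq_mul]
  ring

end ChainRule

theorem Real.eventually_hasDerivAt_rpow_const {s₀ : ℝ} (hs₀ : 0 < s₀) (β : ℝ) :
    ∀ᶠ s in 𝓝 s₀, HasDerivAt (fun s => s ^ β) (β * s ^ (β - 1)) s :=
  (eventually_gt_nhds hs₀).mono fun _ hs => Real.hasDerivAt_rpow_const (Or.inl hs.ne')

theorem Real.hasDerivAt_const_mul_rpow_sub_one {s₀ : ℝ} (hs₀ : 0 < s₀) (β : ℝ) :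
    HasDerivAt (fun s => β * s ^ (β - 1)) (β * (β - 1) * s₀ ^ (β - 2)) s₀ := by
  refine ((Real.hasDerivAt_rpow_const (p := β - 1) (Or.inl hs₀.ne')).const_mul β).congr_deriv ?_
  rw [show β - 1 - 1 = β - 2 by ring]
  ring

theorem hasDerivAt_mul_sq_sub (k K u : ℝ) :
    HasDerivAt (fun u => k * u ^ 2 - K) (2 * k * u) u := by
  simpa [mul_comm, mul_left_comm] using ((hasDerivAt_pow 2 u).const_mul k).sub_const K

section TimeDerivatives

variable {k K β t : ℝ}

theorem deriv_rpow_mul_sq_sub (hs : 0 < k * t ^ 2 - K) :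
    deriv (fun u => (k * u ^ 2 - K) ^ β) t = β * (k * t ^ 2 - K) ^ (β - 1) * (2 * k * t) :=
  (((hasDerivAt_mul_sq_sub k K t).rpow_const (Or.inl hs.ne')).congr_deriv (by ring)).deriv

theorem deriv_deriv_rpow_mul_sq_sub (hs : 0 < k * t ^ 2 - K) :
    deriv (deriv fun u => (k * u ^ 2 - K) ^ β) t
      = β * (β - 1) * (k * t ^ 2 - K) ^ (β - 2) * (2 * k * t) ^ 2
        + β * (k * t ^ 2 - K) ^ (β - 1) * (2 * k) := by
  have hq' : HasDerivAt (fun u => 2 * k * u) (2 * k) t := by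
    simpa using (hasDerivAt_id t).const_mul (2 * k)
  exact deriv_deriv_comp (φ := fun s => s ^ β) (q := fun u => k * u ^ 2 - K)
    (Real.eventually_hasDerivAt_rpow_const hs β) (Real.hasDerivAt_const_mul_rpow_sub_one hs β)
    (.of_forall (hasDerivAt_mul_sq_sub k K)) hq'

end TimeDerivatives

theorem EuclideanSpace.laplacian_eq_sum_single {ι F : Type*} [Fintype ι] [DecidableEq ι]
    [NormedAddCommGroup F] [NormedSpace ℝ F] (f : EuclideanSpace ℝ ι → F)
    (x : EuclideanSpace ℝ ι) :
    Δ f x = ∑ i, iteratedFDeriv ℝ 2 f x (fun _ => EuclideanSpace.single i 1) := by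
  rw [laplacian_eq_iteratedFDeriv_orthonormalBasis f (EuclideanSpace.basisFun ι ℝ)]
  refine Finset.sum_congr rfl fun i _ => ?_
  congr 1
  ext j : 1
  fin_cases j <;> simp

section Radial

variable {E : Type*} [NormedAddCommGroup E] [InnerProductSpace ℝ E] [FiniteDimensional ℝ E]

theorem laplacian_comp_sub_norm_sq {φ φ' : ℝ → ℝ} {φ'' K : ℝ} {p x : E}
    (hφ : ∀ᶠ s in 𝓝 (K - ‖x - p‖ ^ 2), HasDerivAt φ (φ' s) s)
    (hφ' : HasDerivAt φ' φ'' (K - ‖x - p‖ ^ 2)) :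
    Δ (fun y => φ (K - ‖y - p‖ ^ 2)) x
      = 4 * φ'' * ‖x - p‖ ^ 2 - 2 * Module.finrank ℝ E * φ' (K - ‖x - p‖ ^ 2) := by
  have hQ : ∀ y : E, HasFDerivAt (fun y => K - ‖y - p‖ ^ 2) ((-2 : ℝ) • innerSL ℝ (y - p)) y :=
    fun y => (((hasFDerivAt_id y).sub_const p).norm_sq.const_sub K).congr_fderiv (by ext; simp)
  have hQ' : HasFDerivAt (fun y : E => (-2 : ℝ) • innerSL ℝ (y - p)) ((-2 : ℝ) • innerSL ℝ) x :=
    ((innerSL ℝ).hasFDerivAt.comp x ((hasFDerivAt_id x).sub_const p)).const_smul (-2 : ℝ)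
  set b := stdOrthonormalBasis ℝ E
  have hterm : ∀ i, iteratedFDeriv ℝ 2 (fun y => φ (K - ‖y - p‖ ^ 2)) x ![b i, b i]
      = 4 * φ'' * (⟪x - p, b i⟫_ℝ * ⟪b i, x - p⟫_ℝ) - 2 * φ' (K - ‖x - p‖ ^ 2) := by
    intro i
    rw [iteratedFDeriv_two_comp_apply (Q := fun y => K - ‖y - p‖ ^ 2) hφ hφ' (.of_forall hQ) hQ']
    simp only [Matrix.cons_val_zero, Matrix.cons_val_one, smul_apply, innerSL_apply_apply,
      smul_eq_mul]
    rw [innerSL_apply_apply, b.inner_eq_one, real_inner_comm (b i)]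
    ring
  rw [laplacian_eq_iteratedFDeriv_orthonormalBasis _ b]
  beta_reduce
  rw [Finset.sum_congr rfl fun i _ => hterm i,
    Finset.sum_sub_distrib, ← Finset.mul_sum, b.sum_inner_mul_inner, real_inner_self_eq_norm_sq]
  simp only [Finset.sum_const, Finset.card_univ, Fintype.card_fin, nsmul_eq_mul]
  ring

theorem laplacian_rpow_sub_norm_sq {K β : ℝ} {p x : E} (hs : 0 < K - ‖x - p‖ ^ 2) :
    Δ (fun y => (K - ‖y - p‖ ^ 2) ^ β) x
      = 4 * (β * (β - 1) * (K - ‖x - p‖ ^ 2) ^ (β - 2)) * ‖x - p‖ ^ 2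
        - 2 * Module.finrank ℝ E * (β * (K - ‖x - p‖ ^ 2) ^ (β - 1)) :=
  laplacian_comp_sub_norm_sq (φ := fun s => s ^ β) (Real.eventually_hasDerivAt_rpow_const hs β)
    (Real.hasDerivAt_const_mul_rpow_sub_one hs β)

end Radial

theorem norm_hyperplane_reflection_eq_norm_sub_mirror {E : Type*} [NormedAddCommGroup E]
    [InnerProductSpace ℝ E] (a x : E) (b : ℝ) :
    ‖x + (2 * ((b - ⟪a, x⟫_ℝ) / ⟪a, a⟫_ℝ)) • a‖ = ‖x - (2 * (b / ⟪a, a⟫_ℝ)) • a‖ := by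
  rcases eq_or_ne a 0 with rfl | ha
  · simp
  have hA : ⟪a, a⟫_ℝ ≠ 0 := inner_self_ne_zero.2 ha
  rw [← sq_eq_sq₀ (norm_nonneg _) (norm_nonneg _), ← real_inner_self_eq_norm_sq,
    ← real_inner_self_eq_norm_sq]
  simp only [inner_add_left, inner_add_right, inner_sub_left, inner_sub_right,
    real_inner_smul_left, real_inner_smul_right, real_inner_comm a x]
  field_simp
  ring

theorem epd_equation_hyperplane_reflected_general
    (d : ℕ) (c β : ℝ)
    (a : EuclideanSpace ℝ (Fin d)) (b : ℝ)
    (ν : EuclideanSpace ℝ (Fin d) → EuclideanSpace ℝ (Fin d))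
    (hν : ∀ x, ν x = x + (2 * ((b - (inner ℝ a x : ℝ)) / (inner ℝ a a : ℝ))) • a)
    (f : EuclideanSpace ℝ (Fin d) → ℝ → ℝ)
    (hf : ∀ x t, f x t = (c ^ 2 * t ^ 2 - ‖ν x‖ ^ 2) ^ β) :
    ∀ (x : EuclideanSpace ℝ (Fin d)) (t : ℝ), 0 < t → ‖ν x‖ < c * t →
      deriv (fun s => deriv (fun s' => f x s') s) t
        - ((2 * β - 1 + d) / t) * deriv (fun s => f x s) t
      = c ^ 2 * ∑ i : Fin d,
          iteratedFDeriv ℝ 2 (fun y => f y t) x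
            (fun _ => EuclideanSpace.single i (1 : ℝ)) := by
  intro x t ht hxt
  set p := (2 * (b / ⟪a, a⟫_ℝ)) • a
  have hνp : ∀ y, ‖ν y‖ = ‖y - p‖ := fun y => by
    rw [hν]; exact norm_hyperplane_reflection_eq_norm_sub_mirror a y b
  have hs : 0 < c ^ 2 * t ^ 2 - ‖x - p‖ ^ 2 := by
    rw [← hνp]; nlinarith [norm_nonneg (ν x)]
  have htime : (fun s => f x s) = fun s => (c ^ 2 * s ^ 2 - ‖x - p‖ ^ 2) ^ β :=
    funext fun s => by rw [hf, hνp]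
  have hspace : (fun y => f y t) = fun y => (c ^ 2 * t ^ 2 - ‖y - p‖ ^ 2) ^ β :=
    funext fun y => by rw [hf, hνp]
  rw [← EuclideanSpace.laplacian_eq_sum_single, hspace, laplacian_rpow_sub_norm_sq hs,
    finrank_euclideanSpace_fin, htime, deriv_rpow_mul_sq_sub hs, deriv_deriv_rpow_mul_sq_sub hs]
  have hpow : (c ^ 2 * t ^ 2 - ‖x - p‖ ^ 2) ^ (β - 1)
      = (c ^ 2 * t ^ 2 - ‖x - p‖ ^ 2) ^ (β - 2) * (c ^ 2 * t ^ 2 - ‖x - p‖ ^ 2) := by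
    rw [← Real.rpow_add_one hs.ne']; ring_nf
  rw [hpow]
  field_simp
  ring

theorem epd_equation_hyperplane_reflected
    (d : ℕ) (hd : 1 ≤ d) (c β : ℝ) (hc : 0 < c)
    (a : EuclideanSpace ℝ (Fin d)) (ha : a ≠ 0) (b : ℝ)
    (ν : EuclideanSpace ℝ (Fin d) → EuclideanSpace ℝ (Fin d))
    (hν : ∀ x, ν x = x + (2 * ((b - (inner ℝ a x : ℝ)) / (inner ℝ a a : ℝ))) • a)
    (f : EuclideanSpace ℝ (Fin d) → ℝ → ℝ)
    (hf : ∀ x t, f x t = (c ^ 2 * t ^ 2 - ‖ν x‖ ^ 2) ^ β) :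
    ∀ (x : EuclideanSpace ℝ (Fin d)) (t : ℝ), 0 < t → ‖ν x‖ < c * t →
      deriv (fun s => deriv (fun s' => f x s') s) t
        - ((2 * β - 1 + d) / t) * deriv (fun s => f x s) t
      = c ^ 2 * ∑ i : Fin d,
          iteratedFDeriv ℝ 2 (fun y => f y t) x
            (fun _ => EuclideanSpace.single i (1 : ℝ)) :=
  epd_equation_hyperplane_reflected_general d c β a b ν hν f hf
end

section
/- Let p_n(x,t) = K_{n,d,h}·(c²t² − ‖x‖²)^{(n/2)(d−h)−1}/(ct)^{(n+1)(d−h)+h−2} with normalizing constant K_{n,d,h} = Γ((n+1)(d−h)/2 + h/2)/(π^{d/2}·Γ(n(d−h)/2)), for ‖x‖ < ct, and 0 otherwise. Then ∫_{ℝ^d} p_n(x,t) dx = 1, i.e., p_n is a probability density on the ball of radius ct; equivalently, ‖X‖²/(c²t²) has a Beta(d/2, n(d−h)/2) distribution when X has density p_n. -/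
/-!
Write `R = ct` and `b = n(d-h)/2`; the exponent of `ct` in the denominator is `d + 2b - 2`.
Rescaling `x = R y` reduces the claim to the unit ball, where polar coordinates turn
`∫ (1 - ‖y‖²)^(b-1)` into `d · vol(B₁) · ∫₀¹ r^(d-1) (1 - r²)^(b-1) dr`, and the substitution
`u = r²` makes the radial integral `B(d/2, b) / 2`. With `vol(B₁) = π^(d/2) / Γ(d/2 + 1)` the
total is `π^(d/2) Γ(b) / Γ(d/2 + b)`, the reciprocal of the normalizing constant.
-/

open MeasureTheory Set Real Module ProbabilityTheory

theorem integral_Ioo_rpow_mul_one_sub_rpow {a b : ℝ} (ha : 0 < a) (hb : 0 < b) :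
    ∫ x in Ioo 0 1, x ^ (a - 1) * (1 - x) ^ (b - 1) = beta a b := by
  have hdensity : ∫ x in Ioo 0 1, 1 / beta a b * x ^ (a - 1) * (1 - x) ^ (b - 1) = 1 := by
    rw [integral_eq_lintegral_of_nonneg_ae, ← lintegral_betaPDF, lintegral_betaPDF_eq_one ha hb,
      ENNReal.toReal_one]
    · filter_upwards [ae_restrict_mem measurableSet_Ioo] with x ⟨hx0, hx1⟩
      have : 0 < 1 - x := sub_pos.2 hx1
      have := beta_pos ha hb
      positivity
    · exact Measurable.aestronglyMeasurable (by fun_prop)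
  simp_rw [mul_assoc, integral_const_mul] at hdensity
  field_simp [(beta_pos ha hb).ne'] at hdensity
  exact hdensity

theorem image_sq_Ioo_zero_one : (fun x : ℝ => x ^ 2) '' Ioo 0 1 = Ioo 0 1 := by
  ext u
  constructor
  · rintro ⟨x, ⟨hx0, hx1⟩, rfl⟩
    exact ⟨by positivity, by nlinarith⟩
  · rintro ⟨hu0, hu1⟩
    exact ⟨√u, ⟨sqrt_pos.2 hu0, (sqrt_lt' one_pos).2 (by simpa using hu1)⟩, sq_sqrt hu0.le⟩

theorem integral_Ioo_rpow_mul_one_sub_sq_rpow {a b : ℝ} (ha : 0 < a) (hb : 0 < b) :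
    ∫ x in Ioo 0 1, x ^ (a - 1) * (1 - x ^ 2) ^ (b - 1) = beta (a / 2) b / 2 := by
  have hsubst := integral_image_eq_integral_abs_deriv_smul (s := Ioo 0 1) measurableSet_Ioo
    (fun x _ => (hasDerivAt_pow 2 x).hasDerivWithinAt)
    ((pow_left_strictMonoOn₀ two_ne_zero).injOn.mono fun x hx => le_of_lt hx.1)
    (fun u : ℝ => u ^ (a / 2 - 1) * (1 - u) ^ (b - 1))
  rw [image_sq_Ioo_zero_one, integral_Ioo_rpow_mul_one_sub_rpow (by positivity) hb] at hsubst
  rw [hsubst, ← integral_div]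
  refine setIntegral_congr_fun measurableSet_Ioo fun x ⟨hx0, _⟩ => ?_
  have hjacobian : |(2 : ℕ) * x ^ (2 - 1)| * (x ^ 2) ^ (a / 2 - 1) = 2 * x ^ (a - 1) := by
    rw [← rpow_natCast x 2, ← rpow_mul hx0.le, show a - 1 = 2 * (a / 2 - 1) + 1 by ring,
      rpow_add_one hx0.ne', abs_of_pos (by positivity)]
    push_cast
    ring
  rw [smul_eq_mul, ← mul_assoc, hjacobian]
  ring

section InnerProductSpace

variable {E : Type*} [NormedAddCommGroup E] [InnerProductSpace ℝ E] [FiniteDimensional ℝ E]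
  [MeasurableSpace E] [BorelSpace E] [Nontrivial E]

theorem volume_real_ball_zero_one :
    volume.real (Metric.ball (0 : E) 1)
      = π ^ ((finrank ℝ E : ℝ) / 2) / Gamma (finrank ℝ E / 2 + 1) := by
  rw [measureReal_def, InnerProductSpace.volume_ball, ENNReal.ofReal_one, one_pow, one_mul,
    ENNReal.toReal_ofReal (by positivity), sqrt_eq_rpow, ← rpow_mul_natCast pi_pos.le]
  ring_nf

theorem integral_one_sub_sq_norm_rpow_of_norm_lt_one {b : ℝ} (hb : 0 < b) :
    ∫ x : E, (if ‖x‖ < 1 then (1 - ‖x‖ ^ 2) ^ (b - 1) else 0)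
      = π ^ ((finrank ℝ E : ℝ) / 2) * Gamma b / Gamma (finrank ℝ E / 2 + b) := by
  set d := finrank ℝ E with hd_def
  have hd : 0 < d := finrank_pos
  have hradial : ∫ r in Ioi (0 : ℝ), r ^ (d - 1) • (if r < 1 then (1 - r ^ 2) ^ (b - 1) else 0)
      = beta (d / 2) b / 2 := by
    rw [← integral_Ioo_rpow_mul_one_sub_sq_rpow (by positivity) hb,
      setIntegral_eq_of_subset_of_forall_sdiff_eq_zero (s := Ioo (0 : ℝ) 1) measurableSet_Ioi
        Ioo_subset_Ioi_self fun r ⟨hr0, hr⟩ => by simp [show ¬r < 1 from fun h => hr ⟨hr0, h⟩]]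
    refine setIntegral_congr_fun measurableSet_Ioo fun r ⟨_, hr1⟩ => ?_
    rw [if_pos hr1, smul_eq_mul, ← rpow_natCast, Nat.cast_sub hd, Nat.cast_one]
  rw [integral_fun_norm_addHaar volume fun r => if r < 1 then (1 - r ^ 2) ^ (b - 1) else 0,
    hradial, volume_real_ball_zero_one, beta, Gamma_add_one (by positivity)]
  have := Gamma_pos_of_pos (show (0 : ℝ) < d / 2 by positivity)
  have := Gamma_pos_of_pos (show (0 : ℝ) < d / 2 + b by positivity)
  simp only [nsmul_eq_mul, smul_eq_mul, ← hd_def]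
  field_simp

theorem integral_sq_sub_sq_norm_rpow_of_norm_lt {b R : ℝ} (hb : 0 < b) (hR : 0 < R) :
    ∫ x : E, (if ‖x‖ < R then (R ^ 2 - ‖x‖ ^ 2) ^ (b - 1) else 0)
      = R ^ ((finrank ℝ E : ℝ) + 2 * b - 2) *
        (π ^ ((finrank ℝ E : ℝ) / 2) * Gamma b / Gamma (finrank ℝ E / 2 + b)) := by
  let g : E → ℝ := fun y => if ‖y‖ < 1 then (1 - ‖y‖ ^ 2) ^ (b - 1) else 0
  have hrescale : ∀ x : E, (if ‖x‖ < R then (R ^ 2 - ‖x‖ ^ 2) ^ (b - 1) else 0)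
      = R ^ (2 * (b - 1)) * g (R⁻¹ • x) := by
    intro x
    simp only [g, norm_smul, norm_inv, norm_of_nonneg hR.le, inv_mul_eq_div, div_lt_one hR]
    split_ifs with hx
    · have : (‖x‖ / R) ^ 2 ≤ 1 := by
        rw [div_pow, div_le_one (by positivity)]
        exact pow_le_pow_left₀ (norm_nonneg x) hx.le 2
      rw [show R ^ 2 - ‖x‖ ^ 2 = R ^ 2 * (1 - (‖x‖ / R) ^ 2) by field_simp,
        mul_rpow (by positivity) (sub_nonneg.2 this), ← rpow_natCast, ← rpow_mul hR.le]
      norm_num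
    · rw [mul_zero]
  simp_rw [hrescale]
  rw [integral_const_mul, Measure.integral_comp_inv_smul_of_nonneg volume g hR.le,
    integral_one_sub_sq_norm_rpow_of_norm_lt_one hb, smul_eq_mul, ← mul_assoc, ← rpow_natCast,
    ← rpow_add hR]
  ring_nf

end InnerProductSpace

theorem dirichlet_random_flight_density_integrates_to_one_general
    (d h n : ℕ) (hdh : h < d) (hn : 1 ≤ n)
    (c t : ℝ) (hc : 0 < c) (ht : 0 < t)
    (p : EuclideanSpace ℝ (Fin d) → ℝ)
    (hp : ∀ x, p x =
      if ‖x‖ < c * t then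
        (Real.Gamma (((n + 1 : ℝ) * ((d : ℝ) - h)) / 2 + (h : ℝ) / 2) /
          (Real.pi ^ ((d : ℝ) / 2) * Real.Gamma (((n : ℝ) * ((d : ℝ) - h)) / 2))) *
        (c ^ 2 * t ^ 2 - ‖x‖ ^ 2) ^ (((n : ℝ) * ((d : ℝ) - h)) / 2 - 1) /
        (c * t) ^ ((n + 1 : ℝ) * ((d : ℝ) - h) + (h : ℝ) - 2)
      else 0) :
    ∫ x : EuclideanSpace ℝ (Fin d), p x = 1 := by
  have : NeZero d := ⟨by omega⟩
  set R := c * t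
  set b := ((n : ℝ) * ((d : ℝ) - h)) / 2
  have hR : 0 < R := mul_pos hc ht
  have hb : 0 < b := by
    have : (h : ℝ) < d := by exact_mod_cast hdh
    have : (1 : ℝ) ≤ n := by exact_mod_cast hn
    positivity
  have hGamma_arg : ((n + 1 : ℝ) * ((d : ℝ) - h)) / 2 + (h : ℝ) / 2 = d / 2 + b := by ring
  have hR_exponent : (n + 1 : ℝ) * ((d : ℝ) - h) + (h : ℝ) - 2 = d + 2 * b - 2 := by ring
  have hp_eq : p = fun x =>
      Gamma (d / 2 + b) / (π ^ ((d : ℝ) / 2) * Gamma b) / R ^ (d + 2 * b - 2) *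
        (if ‖x‖ < R then (R ^ 2 - ‖x‖ ^ 2) ^ (b - 1) else 0) := by
    funext x
    rw [hp x, hGamma_arg, hR_exponent, mul_pow]
    split_ifs <;> ring
  rw [hp_eq, integral_const_mul, integral_sq_sub_sq_norm_rpow_of_norm_lt hb hR,
    finrank_euclideanSpace_fin]
  have := Gamma_pos_of_pos hb
  have := Gamma_pos_of_pos (show 0 < (d : ℝ) / 2 + b by positivity)
  field_simp

theorem dirichlet_random_flight_density_integrates_to_one
    (d h n : ℕ) (hd : 2 ≤ d) (hh : h = 1 ∨ h = 2) (hdh : h < d) (hn : 1 ≤ n)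
    (c t : ℝ) (hc : 0 < c) (ht : 0 < t)
    (p : EuclideanSpace ℝ (Fin d) → ℝ)
    (hp : ∀ x, p x =
      if ‖x‖ < c * t then
        (Real.Gamma (((n + 1 : ℝ) * ((d : ℝ) - h)) / 2 + (h : ℝ) / 2) /
          (Real.pi ^ ((d : ℝ) / 2) * Real.Gamma (((n : ℝ) * ((d : ℝ) - h)) / 2))) *
        (c ^ 2 * t ^ 2 - ‖x‖ ^ 2) ^ (((n : ℝ) * ((d : ℝ) - h)) / 2 - 1) /
        (c * t) ^ ((n + 1 : ℝ) * ((d : ℝ) - h) + (h : ℝ) - 2)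
      else 0) :
    ∫ x : EuclideanSpace ℝ (Fin d), p x = 1 :=
  dirichlet_random_flight_density_integrates_to_one_general d h n hdh hn c t hc ht p hp
end

section
/- Define p* on the closed ball of radius R by p*(x) = p_n(x,t) for ‖x‖ < R and p*(x) = (R^{2d}/‖x‖^{2d})·p_n(R²x/‖x‖², t) for R²/(ct) < ‖x‖ ≤ R (and 0 elsewhere), where p_n(·,t) is a probability density supported on the open ball of radius ct and t > R/c. If p_n is continuous on the open ball of radius ct, then ∫_{ℝ^d} p*(x) dx = 1. -/
open MeasureTheory Metric EuclideanGeometry Set Submodule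

section
variable (d : ℕ)
local notation "E" => EuclideanSpace ℝ (Fin d)

lemma aux_det (R : ℝ) (hR : 0 < R) (x : E) (hx : x ≠ 0) :
    |((((R / ‖x‖) ^ 2) • (reflection (ℝ ∙ x)ᗮ : E →L[ℝ] E))).det| = R ^ (2*d) / ‖x‖ ^ (2*d) := by
  rw [ContinuousLinearMap.det, ContinuousLinearMap.coe_smul, LinearMap.det_smul]
  have h2 : LinearMap.det ((reflection (ℝ ∙ x)ᗮ : E →L[ℝ] E) : E →ₗ[ℝ] E)
      = (-1 : ℝ) ^ (Module.finrank ℝ (((ℝ ∙ x)ᗮ)ᗮ : Submodule ℝ E)) := det_reflection _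
  rw [h2, Submodule.orthogonal_orthogonal, finrank_span_singleton hx, finrank_euclideanSpace_fin]
  have hxpos : (0:ℝ) < ‖x‖ := norm_pos_iff.mpr hx
  rw [abs_mul, abs_of_nonneg (by positivity : (0:ℝ) ≤ ((R/‖x‖)^2)^d)]
  simp only [pow_one, abs_neg, abs_one, mul_one]
  rw [pow_mul, pow_mul, ← div_pow]
  rw [div_pow]

lemma aux_fx (R : ℝ) (x : E) : inversion (0 : E) R x = (R ^ 2 / ‖x‖ ^ 2) • x := by
  simp [inversion_def, dist_zero_right, div_pow]

lemma aux_norm (R : ℝ) (hR : 0 < R) (x : E) : ‖inversion (0 : E) R x‖ = R ^ 2 / ‖x‖ := by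
  simpa [dist_zero_right] using dist_inversion_center (0 : E) x R

end

theorem reflected_density_integrates_to_one
    (d : ℕ) (hd : 1 ≤ d) (c R t : ℝ) (hc : 0 < c) (hR : 0 < R) (ht : R / c < t)
    (p : EuclideanSpace ℝ (Fin d) → ℝ)
    (hcont : ContinuousOn p (Metric.ball (0 : EuclideanSpace ℝ (Fin d)) (c * t)))
    (hnonneg : ∀ x, 0 ≤ p x)
    (hsupp : ∀ x : EuclideanSpace ℝ (Fin d), c * t ≤ ‖x‖ → p x = 0)
    (hint : ∫ x : EuclideanSpace ℝ (Fin d), p x = 1)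
    (pstar : EuclideanSpace ℝ (Fin d) → ℝ)
    (hpstar : ∀ x, pstar x =
      (if ‖x‖ < R then p x else 0) +
      (if R ^ 2 / (c * t) < ‖x‖ ∧ ‖x‖ ≤ R then
        (R ^ (2 * d) / ‖x‖ ^ (2 * d)) * p ((R ^ 2 / ‖x‖ ^ 2) • x) else 0)) :
    ∫ x : EuclideanSpace ℝ (Fin d), pstar x = 1 := by
  haveI : Nonempty (Fin d) := ⟨⟨0, hd⟩⟩
  have hRct : R < c * t := by
    have h := (div_lt_iff₀ hc).mp ht
    nlinarith
  have hct : 0 < c * t := hR.trans hRct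
  have hr0 : 0 < R ^ 2 / (c * t) := by positivity
  have hrR : R ^ 2 / (c * t) < R := by
    rw [div_lt_iff₀ hct]; nlinarith
  -- integrability of p
  have hintg : MeasureTheory.Integrable p := by
    by_contra h
    rw [MeasureTheory.integral_undef h] at hint
    norm_num at hint
  -- the inversion map
  set f : EuclideanSpace ℝ (Fin d) → EuclideanSpace ℝ (Fin d) := inversion (0 : EuclideanSpace ℝ (Fin d)) R with hf
  set f' : EuclideanSpace ℝ (Fin d) → EuclideanSpace ℝ (Fin d) →L[ℝ] EuclideanSpace ℝ (Fin d) :=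
    fun x => ((R / ‖x‖) ^ 2) • (reflection (ℝ ∙ x)ᗮ : EuclideanSpace ℝ (Fin d) →L[ℝ] EuclideanSpace ℝ (Fin d)) with hf'
  have hderiv : ∀ x : EuclideanSpace ℝ (Fin d), x ≠ 0 → HasFDerivAt f (f' x) x := by
    intro x hx
    have := hasFDerivAt_inversion (c := (0 : EuclideanSpace ℝ (Fin d))) (R := R) hx
    simpa [dist_zero_right, hf, hf'] using this
  have hdet : ∀ x : EuclideanSpace ℝ (Fin d), x ≠ 0 → |(f' x).det| = R ^ (2 * d) / ‖x‖ ^ (2 * d) :=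
    fun x hx => aux_det d R hR x hx
  have hA : MeasurableSet {x : EuclideanSpace ℝ (Fin d) | R ^ 2 / (c * t) < ‖x‖ ∧ ‖x‖ < R} := by
    have : {x : EuclideanSpace ℝ (Fin d) | R ^ 2 / (c * t) < ‖x‖ ∧ ‖x‖ < R}
        = (fun x : EuclideanSpace ℝ (Fin d) => ‖x‖) ⁻¹' (Set.Ioo (R ^ 2 / (c * t)) R) := rfl
    rw [this]; exact measurable_norm measurableSet_Ioo
  have hB : MeasurableSet {y : EuclideanSpace ℝ (Fin d) | R < ‖y‖ ∧ ‖y‖ < c * t} := by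
    have : {y : EuclideanSpace ℝ (Fin d) | R < ‖y‖ ∧ ‖y‖ < c * t}
        = (fun x : EuclideanSpace ℝ (Fin d) => ‖x‖) ⁻¹' (Set.Ioo R (c * t)) := rfl
    rw [this]; exact measurable_norm measurableSet_Ioo
  set A := {x : EuclideanSpace ℝ (Fin d) | R ^ 2 / (c * t) < ‖x‖ ∧ ‖x‖ < R} with hAdef
  set B := {y : EuclideanSpace ℝ (Fin d) | R < ‖y‖ ∧ ‖y‖ < c * t} with hBdef
  have hAne : ∀ x ∈ A, x ≠ 0 := by
    intro x hx h0
    rw [h0] at hx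
    simp only [hAdef, Set.mem_setOf_eq, norm_zero] at hx
    exact absurd hx.1 (not_lt.mpr hr0.le)
  have hnormf : ∀ x : EuclideanSpace ℝ (Fin d), ‖f x‖ = R ^ 2 / ‖x‖ := fun x => aux_norm d R hR x
  have hff : ∀ x : EuclideanSpace ℝ (Fin d), f (f x) = x := fun x => inversion_inversion _ hR.ne' x
  have himg : f '' A = B := by
    ext y
    constructor
    · rintro ⟨x, hx, rfl⟩
      obtain ⟨h1, h2⟩ := hx
      have hxpos : (0:ℝ) < ‖x‖ := lt_trans hr0 h1
      rw [hBdef, Set.mem_setOf_eq, hnormf]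
      constructor
      · rw [lt_div_iff₀ hxpos]; nlinarith
      · rw [div_lt_iff₀ hxpos]
        rw [div_lt_iff₀ hct] at h1
        nlinarith
    · intro hy
      obtain ⟨h1, h2⟩ := hy
      have hypos : (0:ℝ) < ‖y‖ := hR.trans h1
      refine ⟨f y, ?_, hff y⟩
      rw [hAdef, Set.mem_setOf_eq, hnormf]
      constructor
      · rw [div_lt_div_iff₀ hct hypos]
        nlinarith [mul_lt_mul_of_pos_left h2 (pow_pos hR 2)]
      · rw [div_lt_iff₀ hypos]; nlinarith
  have hfderivA : ∀ x ∈ A, HasFDerivWithinAt f (f' x) A x :=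
    fun x hx => (hderiv x (hAne x hx)).hasFDerivWithinAt
  have hinj : Set.InjOn f A := (inversion_injective (0 : EuclideanSpace ℝ (Fin d)) hR.ne').injOn
  have hCOV : ∫ y in B, p y = ∫ x in A, |(f' x).det| • p (f x) := by
    rw [← himg]
    exact MeasureTheory.integral_image_eq_integral_abs_det_fderiv_smul MeasureTheory.volume hA hfderivA hinj p
  have hIntA : MeasureTheory.IntegrableOn (fun x => |(f' x).det| • p (f x)) A := by
    rw [← MeasureTheory.integrableOn_image_iff_integrableOn_abs_det_fderiv_smul MeasureTheory.volume hA hfderivA hinj p]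
    exact hintg.integrableOn
  -- sphere has measure zero
  have hsph : (MeasureTheory.volume (Metric.sphere (0 : EuclideanSpace ℝ (Fin d)) R)) = 0 :=
    MeasureTheory.Measure.addHaar_sphere MeasureTheory.volume 0 R
  have hae : ∀ᵐ x : EuclideanSpace ℝ (Fin d), ‖x‖ ≠ R := by
    rw [MeasureTheory.ae_iff]
    convert hsph using 2
    ext x
    simp [Metric.mem_sphere, dist_zero_right]
  -- the two pieces
  set q1 : EuclideanSpace ℝ (Fin d) → ℝ := fun x => if ‖x‖ < R then p x else 0 with hq1def
  set q2 : EuclideanSpace ℝ (Fin d) → ℝ := fun x =>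
    if R ^ 2 / (c * t) < ‖x‖ ∧ ‖x‖ ≤ R then
      (R ^ (2 * d) / ‖x‖ ^ (2 * d)) * p ((R ^ 2 / ‖x‖ ^ 2) • x) else 0 with hq2def
  have hq1eq : q1 = (Metric.ball (0 : EuclideanSpace ℝ (Fin d)) R).indicator p := by
    funext x
    by_cases h : ‖x‖ < R <;> simp [hq1def, Set.indicator_apply, mem_ball_zero_iff, h]
  have hq1int : MeasureTheory.Integrable q1 := by
    rw [hq1eq]; exact hintg.indicator measurableSet_ball
  have hq2ae : q2 =ᵐ[MeasureTheory.volume] A.indicator (fun x => |(f' x).det| • p (f x)) := by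
    filter_upwards [hae] with x hx
    show (if R ^ 2 / (c * t) < ‖x‖ ∧ ‖x‖ ≤ R then
        (R ^ (2 * d) / ‖x‖ ^ (2 * d)) * p ((R ^ 2 / ‖x‖ ^ 2) • x) else 0)
      = A.indicator (fun x => |(f' x).det| • p (f x)) x
    by_cases hmem : x ∈ A
    · obtain ⟨h1, h2⟩ := hmem
      have hx0 : x ≠ 0 := hAne x ⟨h1, h2⟩
      have hxA : x ∈ A := ⟨h1, h2⟩
      rw [Set.indicator_of_mem hxA, if_pos ⟨h1, h2.le⟩, hdet x hx0, smul_eq_mul]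
      congr 1
      rw [hf, aux_fx]
    · have hneg : ¬(R ^ 2 / (c * t) < ‖x‖ ∧ ‖x‖ ≤ R) := by
        rintro ⟨h1, h2⟩
        exact hmem ⟨h1, lt_of_le_of_ne h2 hx⟩
      rw [Set.indicator_of_notMem hmem, if_neg hneg]
  have hq2int : MeasureTheory.Integrable q2 := by
    refine MeasureTheory.Integrable.congr ?_ hq2ae.symm
    rw [MeasureTheory.integrable_indicator_iff hA]
    exact hIntA
  have hq2 : ∫ x, q2 x = ∫ y in B, p y := by
    rw [MeasureTheory.integral_congr_ae hq2ae, MeasureTheory.integral_indicator hA, hCOV]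
  have hq1 : ∫ x, q1 x = ∫ x in Metric.ball (0 : EuclideanSpace ℝ (Fin d)) R, p x := by
    rw [hq1eq, MeasureTheory.integral_indicator measurableSet_ball]
  -- splitting the integral of p
  have hsplit : (∫ x : EuclideanSpace ℝ (Fin d), p x)
      = (∫ x in Metric.ball (0 : EuclideanSpace ℝ (Fin d)) R, p x) + ∫ y in B, p y := by
    rw [← MeasureTheory.integral_indicator measurableSet_ball,
      ← MeasureTheory.integral_indicator hB,
      ← MeasureTheory.integral_add (hintg.indicator measurableSet_ball) (hintg.indicator hB)]
    refine MeasureTheory.integral_congr_ae ?_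
    filter_upwards [hae] with x hx
    rcases lt_trichotomy ‖x‖ R with h | h | h
    · have hnB : x ∉ B := fun hcon => absurd hcon.1 (not_lt.mpr h.le)
      rw [Set.indicator_of_mem (mem_ball_zero_iff.mpr h), Set.indicator_of_notMem hnB, add_zero]
    · exact absurd h hx
    · have hnb : x ∉ Metric.ball (0 : EuclideanSpace ℝ (Fin d)) R := by
        rw [mem_ball_zero_iff]; exact not_lt.mpr h.le
      rw [Set.indicator_of_notMem hnb, zero_add]
      by_cases h2 : ‖x‖ < c * t
      · have hxB : x ∈ B := ⟨h, h2⟩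
        rw [Set.indicator_of_mem hxB]
      · have hnB : x ∉ B := fun hcon => h2 hcon.2
        rw [Set.indicator_of_notMem hnB, hsupp x (not_lt.mp h2)]
  -- put it together
  have hps : pstar = fun x => q1 x + q2 x := funext hpstar
  rw [hps, MeasureTheory.integral_add hq1int hq2int, hq1, hq2, ← hsplit, hint]
end

section
/- For the planar reflecting Dirichlet random flight (d = 2, h = 1) with n changes of direction and t > R/c, the distance distribution function satisfies P_n{D₂*(t) < r} = 1 − (1 − r²/(ct)²)^{n/2} + (1 − R⁴/(ctr)²)^{n/2}·𝟙_{(R²/(ct), R]}(r) for r ∈ (0, R]. Equivalently: the integral of the radial density q*_{n,2,1}(s,t) = n/(ct)²·[ s(1 − s²/(ct)²)^{n/2−1}·𝟙_{(0,R)}(s) + (R⁴/s³)(1 − R⁴/(cts)²)^{n/2−1}·𝟙_{(R²/(ct),R]}(s) ] over (0,r) equals the stated expression. -/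
open Set MeasureTheory intervalIntegral
open scoped Interval

/-!
The density is the sum of the free density `s ↦ n/a² · s (1 - s²/a²)^(n/2-1)`, `a = ct`, and its
image under the inversion `s ↦ R²/s`, which lives on `(s₀, R]` with `s₀ = R²/a`. The two pieces
are the derivatives of the monotone functions `-(1 - s²/a²)^(n/2)` and `(1 - s₀²/s²)^(n/2)`, so
the fundamental theorem of calculus computes both integrals; a nonnegative derivative of a
continuous function is automatically integrable, which covers the singularity of the reflected
density at `s₀` when `n = 1`.
-/

theorem intervalIntegral.integral_indicator_Ioi {f : ℝ → ℝ} {a b c : ℝ} (hab : a ≤ b)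
    (hac : a ≤ c) :
    ∫ x in a..b, (Ioi c).indicator f x = if c < b then ∫ x in c..b, f x else 0 := by
  rw [integral_of_le hab, setIntegral_indicator measurableSet_Ioi, Ioc_inter_Ioi,
    sup_eq_right.2 hac]
  split_ifs with hcb
  · rw [integral_of_le hcb.le]
  · rw [Ioc_eq_empty hcb, setIntegral_empty]

theorem MeasureTheory.IntegrableOn.intervalIntegrable_indicator_Ioi {f : ℝ → ℝ} {a b c : ℝ}
    (hf : IntegrableOn f (Ioc c b)) (hab : a ≤ b) :
    IntervalIntegrable ((Ioi c).indicator f) volume a b :=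
  (intervalIntegrable_iff_integrableOn_Ioc_of_le hab).2 <|
    (integrableOn_indicator_iff measurableSet_Ioi).2 <| hf.mono_set fun _ hx => ⟨hx.1, hx.2.2⟩

theorem sq_div_div_sq (R a s : ℝ) : (R ^ 2 / a) ^ 2 / s ^ 2 = R ^ 4 / (a * s) ^ 2 := by
  rw [div_pow, ← pow_mul, mul_pow, div_div]

section RadialDensities

variable {k a s₀ r : ℝ}

theorem hasDerivAt_neg_one_sub_sq_div_sq_rpow {x : ℝ} (hx : 1 - x ^ 2 / a ^ 2 ≠ 0) :
    HasDerivAt (fun s => -(1 - s ^ 2 / a ^ 2) ^ (k / 2))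
      (k / a ^ 2 * (x * (1 - x ^ 2 / a ^ 2) ^ (k / 2 - 1))) x := by
  have hbase : HasDerivAt (fun s : ℝ => 1 - s ^ 2 / a ^ 2) (-(2 * x / a ^ 2)) x := by
    simpa using ((hasDerivAt_pow 2 x).div_const (a ^ 2)).const_sub 1
  refine (hbase.rpow_const (p := k / 2) (Or.inl hx)).fun_neg.congr_deriv ?_
  ring

theorem hasDerivAt_one_sub_sq_div_sq_rpow {x : ℝ} (hx₀ : x ≠ 0)
    (hx : 1 - s₀ ^ 2 / x ^ 2 ≠ 0) :
    HasDerivAt (fun s => (1 - s₀ ^ 2 / s ^ 2) ^ (k / 2))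
      (k * s₀ ^ 2 / x ^ 3 * (1 - s₀ ^ 2 / x ^ 2) ^ (k / 2 - 1)) x := by
  have hbase : HasDerivAt (fun s : ℝ => 1 - s₀ ^ 2 / s ^ 2) (2 * s₀ ^ 2 / x ^ 3) x := by
    refine ((hasDerivAt_const x (s₀ ^ 2)).fun_div (hasDerivAt_pow 2 x)
      (pow_ne_zero 2 hx₀)).const_sub 1 |>.congr_deriv ?_
    field_simp
    ring
  refine (hbase.rpow_const (p := k / 2) (Or.inl hx)).congr_deriv ?_
  ring

theorem one_sub_sq_div_sq_pos {x y : ℝ} (hx : 0 ≤ x) (hxy : x < y) : 0 < 1 - x ^ 2 / y ^ 2 := by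
  have hy : 0 < y := hx.trans_lt hxy
  rw [sub_pos, div_lt_one (by positivity)]
  nlinarith

theorem continuous_neg_one_sub_sq_div_sq_rpow (hk : 0 ≤ k) :
    Continuous fun s => -(1 - s ^ 2 / a ^ 2) ^ (k / 2) := by
  fun_prop (disch := positivity)

theorem intervalIntegrable_mul_one_sub_sq_div_sq_rpow (hk : 0 ≤ k) (hr : 0 ≤ r)
    (hra : r ≤ a) :
    IntervalIntegrable (fun s => k / a ^ 2 * (s * (1 - s ^ 2 / a ^ 2) ^ (k / 2 - 1)))
      volume 0 r := by
  rw [intervalIntegrable_iff_integrableOn_Ioc_of_le hr]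
  refine integrableOn_deriv_of_nonneg (continuous_neg_one_sub_sq_div_sq_rpow hk).continuousOn
    (fun x hx => hasDerivAt_neg_one_sub_sq_div_sq_rpow
      (one_sub_sq_div_sq_pos hx.1.le (hx.2.trans_le hra)).ne') fun x hx => ?_
  have hbase := one_sub_sq_div_sq_pos hx.1.le (hx.2.trans_le hra)
  have hx₀ := hx.1
  positivity

theorem integral_mul_one_sub_sq_div_sq_rpow (hk : 0 ≤ k) (hr : 0 ≤ r) (hra : r ≤ a) :
    ∫ s in 0..r, k / a ^ 2 * (s * (1 - s ^ 2 / a ^ 2) ^ (k / 2 - 1)) =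
      1 - (1 - r ^ 2 / a ^ 2) ^ (k / 2) := by
  rw [integral_eq_sub_of_hasDerivAt_of_le hr
    (continuous_neg_one_sub_sq_div_sq_rpow hk).continuousOn
    (fun x hx => hasDerivAt_neg_one_sub_sq_div_sq_rpow
      (one_sub_sq_div_sq_pos hx.1.le (hx.2.trans_le hra)).ne')
    (intervalIntegrable_mul_one_sub_sq_div_sq_rpow hk hr hra),
    zero_pow two_ne_zero, zero_div, sub_zero, Real.one_rpow]
  ring

theorem continuousOn_one_sub_sq_div_sq_rpow (hk : 0 ≤ k) (hs₀ : 0 < s₀) :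
    ContinuousOn (fun s => (1 - s₀ ^ 2 / s ^ 2) ^ (k / 2)) (Ici s₀) := by
  refine ContinuousOn.rpow_const ?_ fun _ _ => Or.inr (by positivity)
  exact continuousOn_const.sub <| continuousOn_const.div (continuousOn_pow 2)
    fun x hx => pow_ne_zero 2 (hs₀.trans_le hx).ne'

theorem integrableOn_mul_div_pow_three_one_sub_sq_div_sq_rpow (hk : 0 ≤ k) (hs₀ : 0 < s₀) :
    IntegrableOn (fun s => k * s₀ ^ 2 / s ^ 3 * (1 - s₀ ^ 2 / s ^ 2) ^ (k / 2 - 1))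
      (Ioc s₀ r) := by
  refine integrableOn_deriv_of_nonneg ((continuousOn_one_sub_sq_div_sq_rpow hk hs₀).mono
      Icc_subset_Ici_self)
    (fun x hx => hasDerivAt_one_sub_sq_div_sq_rpow (hs₀.trans hx.1).ne'
      (one_sub_sq_div_sq_pos hs₀.le hx.1).ne') fun x hx => ?_
  have hbase := one_sub_sq_div_sq_pos hs₀.le hx.1
  have hx₀ := hs₀.trans hx.1
  positivity

theorem integral_mul_div_pow_three_one_sub_sq_div_sq_rpow (hk : 0 < k) (hs₀ : 0 < s₀)
    (hr : s₀ ≤ r) :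
    ∫ s in s₀..r, k * s₀ ^ 2 / s ^ 3 * (1 - s₀ ^ 2 / s ^ 2) ^ (k / 2 - 1) =
      (1 - s₀ ^ 2 / r ^ 2) ^ (k / 2) := by
  rw [integral_eq_sub_of_hasDerivAt_of_le hr
    ((continuousOn_one_sub_sq_div_sq_rpow hk.le hs₀).mono Icc_subset_Ici_self)
    (fun x hx => hasDerivAt_one_sub_sq_div_sq_rpow (hs₀.trans hx.1).ne'
      (one_sub_sq_div_sq_pos hs₀.le hx.1).ne')
    ((intervalIntegrable_iff_integrableOn_Ioc_of_le hr).2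
      (integrableOn_mul_div_pow_three_one_sub_sq_div_sq_rpow hk.le hs₀))]
  simp [hs₀.ne', hk.ne']

end RadialDensities

theorem planar_reflected_distance_distribution
    (c R t : ℝ) (n : ℕ) (hc : 0 < c) (hR : 0 < R) (ht : R / c < t) (hn : 1 ≤ n)
    (r : ℝ) (hr0 : 0 < r) (hrR : r ≤ R)
    (q : ℝ → ℝ)
    (hq : ∀ s, q s = (n : ℝ) / (c * t) ^ 2 *
      ((if 0 < s ∧ s < R then s * (1 - s ^ 2 / (c * t) ^ 2) ^ ((n : ℝ) / 2 - 1) else 0) +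
       (if R ^ 2 / (c * t) < s ∧ s ≤ R then
          (R ^ 4 / s ^ 3) * (1 - R ^ 4 / (c * t * s) ^ 2) ^ ((n : ℝ) / 2 - 1) else 0))) :
    ∫ s in (0 : ℝ)..r, q s =
      1 - (1 - r ^ 2 / (c * t) ^ 2) ^ ((n : ℝ) / 2) +
        (if R ^ 2 / (c * t) < r ∧ r ≤ R then
          (1 - R ^ 4 / (c * t * r) ^ 2) ^ ((n : ℝ) / 2) else 0) := by
  have hRa : R < c * t := by rwa [div_lt_iff₀ hc, mul_comm] at ht
  set a := c * t
  have ha : 0 < a := hR.trans hRa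
  set s₀ := R ^ 2 / a
  have hs₀ : 0 < s₀ := by positivity
  have hk : (0 : ℝ) < n := by exact_mod_cast hn
  have hq_ae : ∀ᵐ s, s ∈ Ι 0 r →
      q s = (n : ℝ) / a ^ 2 * (s * (1 - s ^ 2 / a ^ 2) ^ ((n : ℝ) / 2 - 1)) +
        (Ioi s₀).indicator
          (fun s => n * s₀ ^ 2 / s ^ 3 * (1 - s₀ ^ 2 / s ^ 2) ^ ((n : ℝ) / 2 - 1)) s := by
    filter_upwards [Measure.ae_ne volume R] with s hsR hs
    rw [uIoc_of_le hr0.le] at hs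
    have hs_lt : s < R := lt_of_le_of_ne (hs.2.trans hrR) hsR
    rw [hq, if_pos ⟨hs.1, hs_lt⟩, indicator_apply, mul_add]
    congr 1
    simp only [mem_Ioi, hs_lt.le, and_true]
    split_ifs
    · rw [← sq_div_div_sq]
      ring
    · rw [mul_zero]
  rw [integral_congr_ae hq_ae, intervalIntegral.integral_add,
    integral_mul_one_sub_sq_div_sq_rpow hk.le hr0.le (hrR.trans hRa.le),
    integral_indicator_Ioi hr0.le hs₀.le]
  · simp only [hrR, and_true]
    split_ifs with hs₀r
    · rw [integral_mul_div_pow_three_one_sub_sq_div_sq_rpow hk hs₀ hs₀r.le, sq_div_div_sq]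
    · rfl
  · exact intervalIntegrable_mul_one_sub_sq_div_sq_rpow hk.le hr0.le (hrR.trans hRa.le)
  · exact (integrableOn_mul_div_pow_three_one_sub_sq_div_sq_rpow hk.le hs₀)
      |>.intervalIntegrable_indicator_Ioi hr0.le
end

section
/- Let p(x,t) = (λe^{−λt}/(2πc))·e^{(λ/c)√(c²t² − ‖x‖²)}/√(c²t² − ‖x‖²) for x ∈ ℝ² with ‖x‖ < ct. Then for 0 < r < ct, ∫_{‖x‖<r} p(x,t) dx = e^{−λt}·(e^{λt} − e^{(λ/c)√(c²t² − r²)}) = 1 − exp{−λt + (λ/c)√(c²t² − r²)}. -/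
/-!
In polar coordinates the disc integral becomes `2π ∫₀ʳ s p(s) ds`, and with `a = λ / c`,
`s · a e^{a√(c²t² - s²)} / √(c²t² - s²)` is the derivative of `-e^{a√(c²t² - s²)}`, so the
radial integral is evaluated by the fundamental theorem of calculus.
-/

open Real MeasureTheory Set Metric

section RadialIntegral

variable {E F : Type*} [NormedAddCommGroup E] [NormedSpace ℝ E] [Nontrivial E]
  [FiniteDimensional ℝ E] [MeasurableSpace E] [BorelSpace E]
  [NormedAddCommGroup F] [NormedSpace ℝ F]

theorem setIntegral_ball_fun_norm_addHaar (μ : Measure E) [μ.IsAddHaarMeasure] (f : ℝ → F)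
    (r : ℝ) :
    ∫ x in ball (0 : E) r, f ‖x‖ ∂μ = Module.finrank ℝ E • μ.real (ball 0 1) •
      ∫ y in Ioo 0 r, y ^ (Module.finrank ℝ E - 1) • f y := by
  have hball : ∀ x : E, (ball (0 : E) r).indicator (fun x => f ‖x‖) x = (Iio r).indicator f ‖x‖ :=
    fun x => by by_cases hx : ‖x‖ < r <;> simp [indicator, hx]
  have hIoi : ∀ y ∈ Ioi (0 : ℝ), y ^ (Module.finrank ℝ E - 1) • (Iio r).indicator f y =
      (Iio r).indicator (fun y => y ^ (Module.finrank ℝ E - 1) • f y) y :=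
    fun y _ => by by_cases hy : y < r <;> simp [indicator, hy]
  rw [← integral_indicator measurableSet_ball, funext hball, integral_fun_norm_addHaar,
    setIntegral_congr_fun measurableSet_Ioi hIoi, setIntegral_indicator measurableSet_Iio,
    Ioi_inter_Iio]

end RadialIntegral

theorem EuclideanSpace.setIntegral_ball_fin_two_fun_norm (f : ℝ → ℝ) {r : ℝ} (hr : 0 ≤ r) :
    ∫ x in ball (0 : EuclideanSpace ℝ (Fin 2)) r, f ‖x‖ = 2 * π * ∫ y in 0..r, y * f y := by
  rw [setIntegral_ball_fun_norm_addHaar, finrank_euclideanSpace_fin, measureReal_def,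
    volume_ball_fin_two, intervalIntegral.integral_of_le hr, integral_Ioc_eq_integral_Ioo]
  simp [ENNReal.toReal_ofReal pi_pos.le, mul_assoc]

theorem hasDerivAt_exp_mul_sqrt_sub_sq {a R s : ℝ} (hs : s ^ 2 < R) :
    HasDerivAt (fun s => exp (a * √(R - s ^ 2)))
      (-(s * (a * exp (a * √(R - s ^ 2)) / √(R - s ^ 2)))) s := by
  have hR : 0 < R - s ^ 2 := sub_pos.2 hs
  have hderiv_sqrt : HasDerivAt (fun s => √(R - s ^ 2)) (-(2 * s) / (2 * √(R - s ^ 2))) s := by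
    simpa using ((hasDerivAt_pow 2 s).const_sub R).sqrt hR.ne'
  convert (hderiv_sqrt.const_mul a).exp using 1
  field_simp [(sqrt_pos.2 hR).ne']

theorem integral_mul_exp_mul_sqrt_sub_sq_div_sqrt {a R r : ℝ} (hr : r ^ 2 < R) :
    ∫ s in 0..r, s * (a * exp (a * √(R - s ^ 2)) / √(R - s ^ 2)) =
      exp (a * √R) - exp (a * √(R - r ^ 2)) := by
  have hlt : ∀ s ∈ uIcc 0 r, s ^ 2 < R := fun s hs =>
    (sq_le_sq.2 (by simpa using abs_sub_left_of_mem_uIcc hs)).trans_lt hr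
  have hcont : ContinuousOn (fun s => s * (a * exp (a * √(R - s ^ 2)) / √(R - s ^ 2)))
      (uIcc 0 r) := by
    fun_prop (disch := exact fun s hs => (sqrt_pos.2 (sub_pos.2 (hlt s hs))).ne')
  rw [intervalIntegral.integral_eq_sub_of_hasDerivAt (f := fun s => -exp (a * √(R - s ^ 2)))
    (fun s hs => by simpa using (hasDerivAt_exp_mul_sqrt_sub_sq (hlt s hs)).fun_neg)
    hcont.intervalIntegrable, zero_pow two_ne_zero, sub_zero]
  ring

theorem planar_flight_disc_probability_general
    (c l t r : ℝ)
    (hr0 : 0 < r) (hr : r < c * t) :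
    ∫ x in Metric.ball (0 : EuclideanSpace ℝ (Fin 2)) r,
        (l * Real.exp (-l * t) / (2 * Real.pi * c)) *
          Real.exp ((l / c) * Real.sqrt (c ^ 2 * t ^ 2 - ‖x‖ ^ 2)) /
          Real.sqrt (c ^ 2 * t ^ 2 - ‖x‖ ^ 2) =
      1 - Real.exp (-l * t + (l / c) * Real.sqrt (c ^ 2 * t ^ 2 - r ^ 2)) := by
  have hct : 0 < c * t := hr0.trans hr
  have hc : c ≠ 0 := left_ne_zero_of_mul hct.ne'
  set R := c ^ 2 * t ^ 2 with hR
  have hsqrt : √R = c * t := by rw [hR, ← mul_pow, sqrt_sq hct.le]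
  have hrR : r ^ 2 < R := by rw [hR, ← mul_pow]; exact pow_lt_pow_left₀ hr hr0.le two_ne_zero
  rw [EuclideanSpace.setIntegral_ball_fin_two_fun_norm
    (fun s => l * exp (-l * t) / (2 * π * c) * exp (l / c * √(R - s ^ 2)) / √(R - s ^ 2)) hr0.le]
  have hintegrand : ∀ s : ℝ,
      s * (l * exp (-l * t) / (2 * π * c) * exp (l / c * √(R - s ^ 2)) / √(R - s ^ 2)) =
        exp (-l * t) / (2 * π) * (s * (l / c * exp (l / c * √(R - s ^ 2)) / √(R - s ^ 2))) :=
    fun s => by ring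
  simp only [hintegrand]
  rw [intervalIntegral.integral_const_mul, integral_mul_exp_mul_sqrt_sub_sq_div_sqrt hrR, hsqrt,
    show l / c * (c * t) = l * t by field_simp, ← mul_assoc, mul_div_cancel₀ _ (by positivity),
    mul_sub, ← exp_add, ← exp_add, neg_mul, neg_add_cancel, exp_zero]

theorem planar_flight_disc_probability
    (c l t r : ℝ) (hc : 0 < c) (hl : 0 < l) (ht : 0 < t)
    (hr0 : 0 < r) (hr : r < c * t) :
    ∫ x in Metric.ball (0 : EuclideanSpace ℝ (Fin 2)) r,
        (l * Real.exp (-l * t) / (2 * Real.pi * c)) *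
          Real.exp ((l / c) * Real.sqrt (c ^ 2 * t ^ 2 - ‖x‖ ^ 2)) /
          Real.sqrt (c ^ 2 * t ^ 2 - ‖x‖ ^ 2) =
      1 - Real.exp (-l * t + (l / c) * Real.sqrt (c ^ 2 * t ^ 2 - r ^ 2)) :=
  planar_flight_disc_probability_general c l t r hr0 hr
end
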